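/- arXiv:2012.12369 — 6 statements merged into one kernel-verified Lean document; each statement's English description precedes it below -/
import Mathlib

section
/- Let d > 0 and N ≥ d be integers and let c, m be positive integers. Then ⌊n/d⌋ = ⌊c·n/m⌋ for all integers n with 0 ≤ n ≤ N if and only if 1/d ≤ c/m < (1 + 1/(N - ((N+1) mod d)))·(1/d). -/
/-!
Write `q = (N + 1) / d` and `K = N - (N + 1) % d = q * d - 1`, the last `n ≤ N` that closes a
full block of length `d`. The bound `1 / d ≤ c / m` is the equation at `n = d`, and it gives
`n / d ≤ c * n / m` for every `n`. The other half, `c * n < (n / d + 1) * m`, holds for all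
`n ≤ N` as soon as it holds at `n = K`, i.e. `c * K < q * m`, because `q * n ≤ (n / d + 1) * K`
for `n ≤ N`; and `c * K < q * m` is the upper bound on `c / m`, since `(1 + 1 / K) / d = q / K`.
-/

namespace Nat

variable {d N n c m : ℕ}

theorem sub_succ_mod_add_one_eq_succ_div_mul (hd : 0 < d) (hN : d ≤ N + 1) :
    N - (N + 1) % d + 1 = (N + 1) / d * d := by
  have := Nat.div_add_mod (N + 1) d
  have := Nat.mod_lt (N + 1) hd
  rw [Nat.mul_comm]
  omega

theorem succ_div_mul_le_div_add_one_mul_sub_succ_mod (hn : n ≤ N) :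
    (N + 1) / d * n ≤ (n / d + 1) * (N - (N + 1) % d) := by
  rcases Nat.eq_zero_or_pos d with rfl | hd
  · simp
  rcases Nat.eq_zero_or_pos ((N + 1) / d) with hq | hq
  · simp [hq]
  have hK := sub_succ_mod_add_one_eq_succ_div_mul hd (Nat.div_pos_iff.1 hq).2
  have hNq := Nat.div_add_mod (N + 1) d
  have hna := Nat.div_add_mod n d
  have hr := Nat.mod_lt (N + 1) hd
  have hb := Nat.mod_lt n hd
  have hnq : n / d ≤ (N + 1) / d := Nat.div_le_div_right (by omega)
  rcases hnq.lt_or_eq with hnq | hnq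
  · nlinarith
  · rw [hnq]
    nlinarith

theorem forall_div_eq_mul_div_iff (hd : 0 < d) (hN : d ≤ N) (hm : 0 < m) :
    (∀ n ≤ N, n / d = c * n / m) ↔
      m ≤ c * d ∧ c * (N - (N + 1) % d) < (N + 1) / d * m := by
  set q := (N + 1) / d
  set K := N - (N + 1) % d
  have hK : K + 1 = q * d := sub_succ_mod_add_one_eq_succ_div_mul hd (by omega)
  have hq : 0 < q := Nat.div_pos (by omega) hd
  constructor
  · intro h
    refine ⟨(Nat.one_le_div_iff hm).1 ?_, (Nat.div_lt_iff_lt_mul hm).1 ?_⟩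
    · rw [← h d hN, Nat.div_self hd]
    · rw [← h K (by omega)]
      exact (Nat.div_lt_iff_lt_mul hd).2 (by omega)
  · rintro ⟨hmcd, hcK⟩ n hn
    refine (Nat.div_eq_of_lt_le ?_ ?_).symm
    · calc n / d * m ≤ n / d * (c * d) := Nat.mul_le_mul_left _ hmcd
        _ = c * (n / d * d) := by ring
        _ ≤ c * n := Nat.mul_le_mul_left _ (Nat.div_mul_le_self n d)
    · refine Nat.lt_of_mul_lt_mul_left (a := q) ?_
      calc q * (c * n) = c * (q * n) := by ring
        _ ≤ c * ((n / d + 1) * K) :=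
          Nat.mul_le_mul_left _ (succ_div_mul_le_div_add_one_mul_sub_succ_mod hn)
        _ = (n / d + 1) * (c * K) := by ring
        _ < (n / d + 1) * (q * m) := Nat.mul_lt_mul_of_pos_left hcK (Nat.succ_pos _)
        _ = q * ((n / d + 1) * m) := by ring

theorem cast_div_lt_one_add_inv_mul_inv_iff {K q : ℕ} (hK : K + 1 = q * d) (hK0 : 0 < K)
    (hm : 0 < m) : (c : ℚ) / m < (1 + 1 / (K : ℚ)) * (1 / d) ↔ c * K < q * m := by
  have hd : (d : ℚ) ≠ 0 := by
    norm_cast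
    rintro rfl
    simp at hK
  have hKq : (1 + 1 / (K : ℚ)) * (1 / d) = q / K := by
    have hK' : (K : ℚ) + 1 = q * d := by exact_mod_cast hK
    field_simp
    linear_combination hK'
  rw [hKq, div_lt_div_iff₀ (by positivity) (by positivity)]
  exact_mod_cast Iff.rfl

end Nat

theorem stmt_2_general (d N c m : ℕ) (hd : 0 < d) (hN : d ≤ N) (hm : 0 < m) :
    (∀ n : ℕ, n ≤ N → n / d = (c * n) / m) ↔
      ((1 : ℚ) / d ≤ (c : ℚ) / m ∧
        (c : ℚ) / m < (1 + 1 / ((N - (N + 1) % d : ℕ) : ℚ)) * (1 / d)) := by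
  have hr := Nat.mod_lt (N + 1) hd
  rw [Nat.forall_div_eq_mul_div_iff hd hN hm]
  refine and_congr ?_ (Nat.cast_div_lt_one_add_inv_mul_inv_iff
    (Nat.sub_succ_mod_add_one_eq_succ_div_mul hd (by omega)) (by omega) hm).symm
  rw [div_le_div_iff₀ (by positivity) (by positivity), one_mul]
  exact_mod_cast Iff.rfl

theorem stmt_2 (d N c m : ℕ) (hd : 0 < d) (hN : d ≤ N) (hc : 0 < c) (hm : 0 < m) :
    (∀ n : ℕ, n ≤ N → n / d = (c * n) / m) ↔
      ((1 : ℚ) / d ≤ (c : ℚ) / m ∧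
        (c : ℚ) / m < (1 + 1 / ((N - (N + 1) % d : ℕ) : ℚ)) * (1 / d)) :=
  stmt_2_general d N c m hd hN hm
end

section
/- Let d > 1, N ≥ d, and c, m be integers with 0 ≤ c < m. If n mod d = ⌊((c·n mod m)·d)/m⌋ for all integers n with 0 ≤ n ≤ N, then ⌊n/d⌋ = ⌊c·n/m⌋ for all such n. -/
theorem stmt_3 (d N c m : ℕ) (hd : 1 < d) (hN : d ≤ N) (hcm : c < m)
    (h : ∀ n : ℕ, n ≤ N → n % d = ((c * n % m) * d) / m) :
    ∀ n : ℕ, n ≤ N → n / d = (c * n) / m := by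
  have hm : 0 < m := by omega
  have hd0 : 0 < d := by omega
  intro n hn
  induction n with
  | zero => simp
  | succ n ih =>
    have hn' : n ≤ N := by omega
    have ihn := ih hn'
    have h1 := h n hn'
    have h2 := h (n + 1) hn
    have hr : c * n % m < m := Nat.mod_lt _ hm
    have e1 : c * (n + 1) = m * (c * n / m) + (c * n % m + c) := by
      rw [mul_add, mul_one]
      conv_lhs => rw [← Nat.div_add_mod (c * n) m]
      ring
    have ediv : c * (n + 1) / m = c * n / m + (c * n % m + c) / m := by
      rw [e1, Nat.mul_add_div hm]
    have emod : c * (n + 1) % m = (c * n % m + c) % m := by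
      rw [e1, Nat.mul_add_mod]
    have e2 : n + 1 = d * (n / d) + (n % d + 1) := by
      conv_lhs => rw [← Nat.div_add_mod n d]
      omega
    have ndiv : (n + 1) / d = n / d + (n % d + 1) / d := by
      rw [e2, Nat.mul_add_div hd0]
    have nmod : (n + 1) % d = (n % d + 1) % d := by
      rw [e2, Nat.mul_add_mod]
    have hnd : n % d < d := Nat.mod_lt _ hd0
    by_cases hc : n % d + 1 = d
    · -- n+1 is a multiple of d; quotient must increment
      have hnm0 : (n + 1) % d = 0 := by rw [nmod, hc]; simp
      have hge : m ≤ c * n % m + c := by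
        by_contra hlt
        push_neg at hlt
        have emod' : c * (n + 1) % m = c * n % m + c := by
          rw [emod, Nat.mod_eq_of_lt hlt]
        rw [hnm0] at h2
        have hz : c * (n + 1) % m * d < m := by
          by_contra hge'
          push_neg at hge'
          have := Nat.div_le_div_right (c := m) hge'
          simp [Nat.div_self hm] at this
          omega
        have hge2 : m ≤ c * n % m * d := by
          by_contra hlt2
          push_neg at hlt2
          have : c * n % m * d / m = 0 := Nat.div_eq_of_lt hlt2
          omega
        have : c * n % m * d ≤ c * (n + 1) % m * d :=
          Nat.mul_le_mul_right d (by omega)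
        omega
      have hval : (c * n % m + c) / m = 1 :=
        Nat.div_eq_of_lt_le (by omega) (by omega)
      have hval2 : (n % d + 1) / d = 1 := by
        rw [hc, Nat.div_self hd0]
      rw [ndiv, ediv, hval, hval2, ihn]
    · -- not a multiple: quotient must stay
      have hnd1 : n % d + 1 < d := by omega
      have hnm : (n + 1) % d = n % d + 1 := by
        rw [nmod, Nat.mod_eq_of_lt hnd1]
      have hlt : c * n % m + c < m := by
        by_contra hge
        push_neg at hge
        have emod' : c * (n + 1) % m = c * n % m + c - m := by
          rw [emod]
          rw [Nat.mod_eq_sub_mod hge, Nat.mod_eq_of_lt (by omega)]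
        have hle : c * (n + 1) % m ≤ c * n % m := by omega
        have := Nat.div_le_div_right (c := m) (Nat.mul_le_mul_right d hle)
        omega
      have hval : (c * n % m + c) / m = 0 := Nat.div_eq_of_lt hlt
      have hval2 : (n % d + 1) / d = 0 := Nat.div_eq_of_lt hnd1
      rw [ndiv, ediv, hval, hval2, ihn]
end

section
/- Let d > 0 and N ≥ d be integers and let c, m be positive integers with 0 ≤ c < m. Then both ⌊n/d⌋ = ⌊c·n/m⌋ and n mod d = ⌊((c·n mod m)·d)/m⌋ hold for all integers n with 0 ≤ n ≤ N if and only if 1/d ≤ c/m < (1 + 1/N)·(1/d). -/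
/-!
Write `c * d = m + t` and `n = d * q + r` with `r < d`. Then
`c * n * d = (m * d) * q + (m * r + t * n)`, and dividing by `m * d` shows that `⌊c n / m⌋ = q` and
`((c n mod m) d) / m = r` hold together exactly when `t * n < m`. Since `1 = d / d` forces `m ≤ c d`,
the condition for all `n ≤ N` is `m ≤ c d` and `(c d - m) N < m`, which is the stated bound on `c / m`.
-/

theorem mul_mul_eq_mul_mul_div_add {c d m t : ℕ} (ht : c * d = m + t) (n : ℕ) :
    c * n * d = m * d * (n / d) + (m * (n % d) + t * n) := by
  calc c * n * d = (m + t) * n := by rw [← ht]; ring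
    _ = m * (d * (n / d) + n % d) + t * n := by rw [Nat.div_add_mod]; ring
    _ = m * d * (n / d) + (m * (n % d) + t * n) := by ring

theorem div_eq_div_and_mod_eq_iff {c d m t : ℕ} (hd : 0 < d) (hm : 0 < m) (ht : c * d = m + t)
    (n : ℕ) : (n / d = c * n / m ∧ n % d = c * n % m * d / m) ↔ t * n < m := by
  have hmd : 0 < m * d := Nat.mul_pos hm hd
  have hdiv : c * n / m = n / d + (m * (n % d) + t * n) / (m * d) := by
    rw [← Nat.mul_div_mul_right _ _ hd, mul_mul_eq_mul_mul_div_add ht, Nat.mul_add_div hmd]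
  have hmod : c * n % m * d = (m * (n % d) + t * n) % (m * d) := by
    rw [← Nat.mul_mod_mul_right, mul_mul_eq_mul_mul_div_add ht, Nat.mul_add_mod]
  constructor
  · rintro ⟨hq, hr⟩
    have hlt : m * (n % d) + t * n < m * d := by
      rw [← Nat.div_eq_zero_iff_lt hmd]
      omega
    rw [hmod, Nat.mod_eq_of_lt hlt, Nat.mul_add_div hm] at hr
    rw [← Nat.div_eq_zero_iff_lt hm]
    omega
  · intro htn
    have hlt : m * (n % d) + t * n < m * d :=
      calc m * (n % d) + t * n < m * (n % d + 1) := by rw [mul_add_one]; omega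
        _ ≤ m * d := Nat.mul_le_mul_left m (Nat.mod_lt n hd)
    rw [hmod, Nat.mod_eq_of_lt hlt, Nat.mul_add_div hm, Nat.div_eq_of_lt htn, hdiv,
      Nat.div_eq_of_lt hlt]
    simp

theorem forall_le_div_eq_div_and_mod_eq_iff {c d m N : ℕ} (hd : 0 < d) (hN : d ≤ N) (hm : 0 < m) :
    (∀ n ≤ N, n / d = c * n / m ∧ n % d = c * n % m * d / m) ↔
      m ≤ c * d ∧ (c * d - m) * N < m := by
  constructor
  · intro h
    have hmcd : m ≤ c * d := by
      have h1 := (h d hN).1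
      rw [Nat.div_self hd] at h1
      exact (Nat.one_le_div_iff hm).mp h1.le
    exact ⟨hmcd, (div_eq_div_and_mod_eq_iff hd hm (by omega) N).mp (h N le_rfl)⟩
  · rintro ⟨hmcd, htN⟩ n hn
    exact (div_eq_div_and_mod_eq_iff hd hm (by omega) n).mpr
      (lt_of_le_of_lt (Nat.mul_le_mul_left _ hn) htN)

theorem one_div_le_div_and_div_lt_iff {c d m N : ℕ} (hd : 0 < d) (hm : 0 < m) (hN : 0 < N) :
    ((1 : ℚ) / d ≤ c / m ∧ (c : ℚ) / m < (1 + 1 / N) * (1 / d)) ↔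
      m ≤ c * d ∧ (c * d - m) * N < m := by
  have hdQ : (0 : ℚ) < d := by exact_mod_cast hd
  have hmQ : (0 : ℚ) < m := by exact_mod_cast hm
  have hNQ : (0 : ℚ) < N := by exact_mod_cast hN
  rw [div_le_div_iff₀ hdQ hmQ, one_mul, show (1 + 1 / (N : ℚ)) * (1 / d) = (N + 1) / (N * d) by
    field_simp, div_lt_div_iff₀ hmQ (by positivity)]
  norm_cast
  refine and_congr_right fun hmcd => ?_
  rw [Nat.sub_mul, Nat.sub_lt_iff_lt_add (Nat.mul_le_mul_right N hmcd)]
  ring_nf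

theorem stmt_4_general (d N c m : ℕ) (hd : 0 < d) (hN : d ≤ N) (hm : 0 < m) :
    (∀ n : ℕ, n ≤ N →
        n / d = (c * n) / m ∧ n % d = ((c * n % m) * d) / m) ↔
      ((1 : ℚ) / d ≤ (c : ℚ) / m ∧ (c : ℚ) / m < (1 + 1 / N) * (1 / d)) := by
  rw [forall_le_div_eq_div_and_mod_eq_iff hd hN hm,
    one_div_le_div_and_div_lt_iff hd hm (hd.trans_le hN)]

theorem stmt_4 (d N c m : ℕ) (hd : 0 < d) (hN : d ≤ N) (hc : 0 < c) (hm : 0 < m)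
    (hcm : c < m) :
    (∀ n : ℕ, n ≤ N →
        n / d = (c * n) / m ∧ n % d = ((c * n % m) * d) / m) ↔
      ((1 : ℚ) / d ≤ (c : ℚ) / m ∧ (c : ℚ) / m < (1 + 1 / N) * (1 / d)) :=
  stmt_4_general d N c m hd hN hm
end

section
/- Let d > 0 and N ≥ d be integers, and let c, m be positive integers satisfying 1/d ≤ c/m < (1 + 1/N)·(1/d). Then for all integers n with 0 ≤ n ≤ N, d divides n if and only if (c·n) mod m < c. -/
theorem stmt_5 (d N c m : ℕ) (hd : 0 < d) (hN : d ≤ N) (hc : 0 < c) (hm : 0 < m)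
    (h1 : (1 : ℚ) / d ≤ (c : ℚ) / m)
    (h2 : (c : ℚ) / m < (1 + 1 / N) * (1 / d)) :
    ∀ n : ℕ, n ≤ N → (d ∣ n ↔ (c * n) % m < c) := by
  have hN0 : 0 < N := lt_of_lt_of_le hd hN
  have hdq : (0:ℚ) < d := by exact_mod_cast hd
  have hmq : (0:ℚ) < m := by exact_mod_cast hm
  have hNq : (0:ℚ) < N := by exact_mod_cast hN0
  -- h1 in nat form: m ≤ c * d
  have hA : m ≤ c * d := by
    have h := (div_le_div_iff₀ hdq hmq).mp h1
    have h' : (m:ℚ) ≤ c * d := by linarith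
    exact_mod_cast h'
  -- h2 in nat form: c * (N*d) < m * (N+1)
  have hB : c * (N * d) < m * (N + 1) := by
    have heq : (1 + 1 / (N:ℚ)) * (1 / d) = (N + 1) / (N * d) := by
      field_simp
    rw [heq] at h2
    have h := (div_lt_div_iff₀ hmq (by positivity)).mp h2
    have h' : (c:ℚ) * (N * d) < m * (N + 1) := by linarith
    exact_mod_cast h'
  intro n hn
  have hq : d * (n / d) + n % d = n := Nat.div_add_mod n d
  set q := n / d with hqdef
  set r := n % d with hrdef
  have hr : r < d := Nat.mod_lt _ hd
  -- m * q ≤ c * n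
  have h3a : m * q ≤ c * (d * q) := by
    calc m * q ≤ (c * d) * q := Nat.mul_le_mul_right _ hA
      _ = c * (d * q) := by ring
  have h3 : m * q ≤ c * n := by
    refine le_trans h3a (Nat.mul_le_mul_left _ (by omega))
  -- c * n * d < m * (n + 1)
  have h4 : c * n * d < m * (n + 1) := by
    rcases Nat.eq_zero_or_pos n with h0 | h0
    · simp [h0]; positivity
    · have h' : c * n * d * N < m * (n + 1) * N := by nlinarith
      exact Nat.lt_of_mul_lt_mul_right h'
  have h5 : c * n < m * (q + 1) := by
    have h' : c * n * d < m * (q + 1) * d := by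
      calc c * n * d < m * (n + 1) := h4
        _ ≤ m * (d * q + d) := Nat.mul_le_mul_left _ (by omega)
        _ = m * (q + 1) * d := by ring
    exact Nat.lt_of_mul_lt_mul_right h'
  have hmexp : m * (q + 1) = m * q + m := by ring
  have hmodeq : (c * n) % m = c * n - m * q := by
    have he : c * n = m * q + (c * n - m * q) := by omega
    conv_lhs => rw [he]
    rw [Nat.mul_add_mod, Nat.mod_eq_of_lt (by omega)]
  rw [hmodeq]
  rw [Nat.dvd_iff_mod_eq_zero, ← hrdef]
  constructor
  · intro hr0
    have hn' : n = d * q := by omega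
    have h' : c * n * d < (m * q + c) * d := by
      calc c * n * d < m * (n + 1) := h4
        _ = m * q * d + m := by rw [hn']; ring
        _ ≤ m * q * d + c * d := by omega
        _ = (m * q + c) * d := by ring
    have := Nat.lt_of_mul_lt_mul_right h'
    omega
  · intro hlt
    by_contra hr0
    have hr1 : 1 ≤ r := Nat.pos_of_ne_zero hr0
    have h2' : c * (d * q) + c ≤ c * n := by
      have hle : d * q + 1 ≤ n := by omega
      calc c * (d * q) + c = c * (d * q + 1) := by ring
        _ ≤ c * n := Nat.mul_le_mul_left _ hle
    omega
end

section
/- Let d > 0 and N ≥ d be integers and let c, m be positive integers. Then ⌊n/d⌋ = ⌊(c·n + c)/m⌋ for all integers n with 0 ≤ n ≤ N if and only if (1 - 1/(N - (N mod d) + 1))·(1/d) ≤ c/m < 1/d. -/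
/-!
With `q = n / d`, the equation `n / d = (c n + c) / m` says `q m ≤ c (n + 1) < (q + 1) m`.
On the block `d q ≤ n < d (q + 1)` the right-hand inequality is tightest at `n = d q + d - 1`,
where it reads `c d < m`, and the left-hand one at `n = d q`, where it reads `q (m - c d) ≤ c`.
Once `c d < m` the latter only gets harder as `q` grows, so it suffices to check it on the last
block `q = N / d`, i.e. at `n = N - N mod d`. Clearing denominators, these two conditions are the
two rational inequalities.
-/

namespace Nat

variable {d c m : ℕ}

theorem div_eq_mul_add_div_of_le (hd : 0 < d) (hlt : c * d < m) {n : ℕ}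
    (hle : n / d * m ≤ c * (d * (n / d) + 1)) : n / d = (c * n + c) / m := by
  have hdiv := Nat.div_add_mod n d
  have hmod := Nat.mod_lt n hd
  refine (Nat.div_eq_of_lt_le ?_ ?_).symm
  · calc n / d * m ≤ c * (d * (n / d) + 1) := hle
      _ ≤ c * (n + 1) := Nat.mul_le_mul_left c (by omega)
      _ = c * n + c := by ring
  · calc c * n + c ≤ c * d * (n / d + 1) := by nlinarith
      _ < (n / d + 1) * m := by nlinarith

theorem mul_le_mul_add_one_of_le (hlt : c * d < m) {q Q : ℕ} (hqQ : q ≤ Q)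
    (hQ : Q * m ≤ c * (d * Q + 1)) : q * m ≤ c * (d * q + 1) := by
  nlinarith

theorem mul_lt_of_forall_div_eq {N : ℕ} (hd : 0 < d) (hN : d ≤ N) (hm : 0 < m)
    (h : ∀ n ≤ N, n / d = (c * n + c) / m) : c * d < m := by
  have h0 := h (d - 1) (by omega)
  have hcd : c * (d - 1) + c = c * d := by
    rw [← Nat.mul_succ, Nat.succ_eq_add_one, Nat.sub_add_cancel hd]
  rw [Nat.div_eq_of_lt (by omega), hcd, eq_comm, Nat.div_eq_zero_iff] at h0
  exact h0.resolve_left hm.ne'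

theorem div_mul_le_of_forall_div_eq {N : ℕ} (hd : 0 < d)
    (h : ∀ n ≤ N, n / d = (c * n + c) / m) : N / d * m ≤ c * (d * (N / d) + 1) := by
  have hN := h (d * (N / d)) (Nat.mul_div_le N d)
  rw [Nat.mul_div_right _ hd] at hN
  calc N / d * m = (c * (d * (N / d)) + c) / m * m := by rw [← hN]
    _ ≤ c * (d * (N / d)) + c := Nat.div_mul_le_self _ _
    _ = c * (d * (N / d) + 1) := by ring

theorem forall_div_eq_mul_add_div_iff {N : ℕ} (hd : 0 < d) (hN : d ≤ N) (hm : 0 < m) :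
    (∀ n ≤ N, n / d = (c * n + c) / m) ↔ c * d < m ∧ N / d * m ≤ c * (d * (N / d) + 1) :=
  ⟨fun h => ⟨mul_lt_of_forall_div_eq hd hN hm h, div_mul_le_of_forall_div_eq hd h⟩,
    fun ⟨hlt, hle⟩ _ hn => div_eq_mul_add_div_of_le hd hlt
      (mul_le_mul_add_one_of_le hlt (Nat.div_le_div_right hn) hle)⟩

end Nat

section Rational

variable {K : Type*} [Field K] [LinearOrder K] [IsStrictOrderedRing K] {d c m : ℕ}

theorem one_sub_one_div_add_one_mul_one_div_le_div_iff (A : ℕ) (hd : 0 < d) (hm : 0 < m) :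
    (1 - 1 / ((A : K) + 1)) * (1 / d) ≤ (c : K) / m ↔ A * m ≤ c * d * (A + 1) := by
  have hA : (1 - 1 / ((A : K) + 1)) * (1 / d) = A / (d * (A + 1)) := by
    field_simp
    ring
  rw [hA, div_le_div_iff₀ (by positivity) (by positivity)]
  norm_cast
  rw [mul_assoc]

theorem div_lt_one_div_iff (hd : 0 < d) (hm : 0 < m) :
    (c : K) / m < 1 / d ↔ c * d < m := by
  rw [div_lt_div_iff₀ (by positivity) (by positivity), one_mul]
  norm_cast

end Rational

theorem stmt_6_general (d N c m : ℕ) (hd : 0 < d) (hN : d ≤ N) (hm : 0 < m) :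
    (∀ n : ℕ, n ≤ N → n / d = (c * n + c) / m) ↔
      ((1 - 1 / ((N - N % d : ℕ) + 1 : ℚ)) * (1 / d) ≤ (c : ℚ) / m ∧
        (c : ℚ) / m < 1 / d) := by
  have hcancel : d * (N / d) * m ≤ c * d * (d * (N / d) + 1) ↔
      N / d * m ≤ c * (d * (N / d) + 1) := by
    rw [show d * (N / d) * m = d * (N / d * m) by ring,
      show c * d * (d * (N / d) + 1) = d * (c * (d * (N / d) + 1)) by ring]
    exact Nat.mul_le_mul_left_iff hd
  rw [Nat.forall_div_eq_mul_add_div_iff hd hN hm,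
    one_sub_one_div_add_one_mul_one_div_le_div_iff _ hd hm, div_lt_one_div_iff hd hm,
    ← Nat.mul_div_self_eq_mod_sub_self, hcancel, and_comm]

theorem stmt_6 (d N c m : ℕ) (hd : 0 < d) (hN : d ≤ N) (hc : 0 < c) (hm : 0 < m) :
    (∀ n : ℕ, n ≤ N → n / d = (c * n + c) / m) ↔
      ((1 - 1 / ((N - N % d : ℕ) + 1 : ℚ)) * (1 / d) ≤ (c : ℚ) / m ∧
        (c : ℚ) / m < 1 / d) :=
  stmt_6_general d N c m hd hN hm
end

section
/- Let d > 0, N ≥ d be integers and c, m positive integers with 0 ≤ c < m, satisfying 1/d ≤ c/m < (1 + 1/N)·(1/d). Then for all integers n with 0 ≤ n ≤ N, c·(n mod d) ≤ (c·n) mod m. -/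
theorem stmt_14 (d N c m : ℕ) (hd : 0 < d) (hN : d ≤ N) (hcm : c < m)
    (h1 : (1 : ℚ) / d ≤ (c : ℚ) / m)
    (h2 : (c : ℚ) / m < (1 + 1 / N) * (1 / d)) :
    ∀ n : ℕ, n ≤ N → c * (n % d) ≤ (c * n) % m := by
  have hm : 0 < m := by omega
  have hNpos : 0 < N := lt_of_lt_of_le hd hN
  have hdQ : (0:ℚ) < d := by exact_mod_cast hd
  have hmQ : (0:ℚ) < m := by exact_mod_cast hm
  have hNQ : (0:ℚ) < N := by exact_mod_cast hNpos
  have key1 : m ≤ c * d := by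
    have h := (div_le_div_iff₀ hdQ hmQ).mp h1
    have h' : (m:ℚ) ≤ (c:ℚ) * d := by linarith
    exact_mod_cast h'
  have key2 : c * d * N < m * (N + 1) := by
    rw [div_lt_iff₀ hmQ] at h2
    have h' : (c:ℚ) * d * N < m * (N + 1) := by
      have hx : (1 + 1 / (N:ℚ)) * (1 / d) * m * (d * N) = m * (N + 1) := by
        field_simp
      nlinarith [mul_lt_mul_of_pos_right h2 (by positivity : (0:ℚ) < d * N)]
    exact_mod_cast h'
  set e := c * d - m with he
  have hcd : c * d = m + e := by omega
  have heN : e * N < m := by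
    rw [hcd] at key2
    nlinarith
  intro n hn
  obtain ⟨q, r, hrd, hnqr⟩ : ∃ q r, r < d ∧ n = d * q + r :=
    ⟨n / d, n % d, Nat.mod_lt _ hd, (Nat.div_add_mod n d).symm⟩
  have hmod : n % d = r := by
    rw [hnqr, Nat.mul_add_mod, Nat.mod_eq_of_lt hrd]
  have hqn : d * q + r ≤ N := hnqr ▸ hn
  have hsmall : q * e + c * r < m := by
    have h3 : d * (q * e + c * r) < d * m := by
      calc d * (q * e + c * r) = d * q * e + (c * d) * r := by ring
        _ = d * q * e + (m + e) * r := by rw [hcd]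
        _ = (d * q + r) * e + m * r := by ring
        _ ≤ N * e + m * r := by
            exact Nat.add_le_add_right (Nat.mul_le_mul_right _ hqn) _
        _ < m + m * r := by
            have : N * e < m := by rw [Nat.mul_comm]; exact heN
            omega
        _ = m * (r + 1) := by ring
        _ ≤ m * d := Nat.mul_le_mul_left _ (by omega)
        _ = d * m := Nat.mul_comm _ _
    exact Nat.lt_of_mul_lt_mul_left h3
  have hcn : c * n = (q * e + c * r) + q * m := by
    rw [hnqr]
    calc c * (d * q + r) = (c * d) * q + c * r := by ring
      _ = (m + e) * q + c * r := by rw [hcd]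
      _ = (q * e + c * r) + q * m := by ring
  rw [hmod, hcn, Nat.add_mul_mod_self_right, Nat.mod_eq_of_lt hsmall]
  exact Nat.le_add_left _ _
end
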